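/- Let X be a countable subshift over a finite alphabet A, and let x ∈ X be ⪯-minimal in X (i.e., every y ∈ X with y ⪯ x satisfies x ⪯ y). Then x is periodic. -/
import Mathlib


namespace CountableSubshift

/-- A configuration over alphabet `A` on the plane `ℤ × ℤ`. -/
abbrev Config (A : Type*) := ℤ × ℤ → A

variable {A : Type*}

/-- The shift by a vector `v`. -/
def shift (v : ℤ × ℤ) (x : Config A) : Config A := fun u => x (u + v)

/-- The shift-orbit of a configuration. -/
def orbit (x : Config A) : Set (Config A) := Set.range fun v => shift v x

variable [TopologicalSpace A]

/-- `Preceq x y` iff `x` belongs to the closure of the shift-orbit of `y`. -/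
def Preceq (x y : Config A) : Prop := x ∈ closure (orbit y)

/-- Strict version of `Preceq`. -/
def Prec (x y : Config A) : Prop := Preceq x y ∧ ¬ Preceq y x

/-- `x ≈ y` : mutual `Preceq`. -/
def OrbEquiv (x y : Config A) : Prop := Preceq x y ∧ Preceq y x

/-- A subshift: nonempty, closed and shift-invariant set of configurations. -/
def IsSubshift (X : Set (Config A)) : Prop :=
  X.Nonempty ∧ IsClosed X ∧ ∀ v : ℤ × ℤ, shift v '' X = X

/-- A configuration is periodic if it has two linearly independent vectors of periodicity. -/
def Periodic (x : Config A) : Prop :=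
  ∃ v w : ℤ × ℤ, shift v x = x ∧ shift w x = x ∧ LinearIndependent ℤ ![v, w]

/-- `x` is at level 0 in `X`: it is `Preceq`-minimal in `X`. -/
def Level0 (X : Set (Config A)) (x : Config A) : Prop :=
  x ∈ X ∧ ∀ y ∈ X, Preceq y x → Preceq x y

/-- `x` is at level 1 in `X`. -/
def Level1 (X : Set (Config A)) (x : Config A) : Prop :=
  x ∈ X ∧ ¬ Level0 X x ∧ ∀ y ∈ X, Prec y x → Level0 X y

/-- `x` is at level 2 in `X`. -/
def Level2 (X : Set (Config A)) (x : Config A) : Prop :=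
  x ∈ X ∧ ¬ Level0 X x ∧ ¬ Level1 X x ∧ ∀ y ∈ X, Prec y x → Level0 X y ∨ Level1 X y

/-- The pattern `p` with (finite) domain `D` appears in `x` at position `u`. -/
def AppearsAt (D : Finset (ℤ × ℤ)) (p : ℤ × ℤ → A) (x : Config A) (u : ℤ × ℤ) : Prop :=
  ∀ d ∈ D, x (u + d) = p d

/-- A subshift of finite type: the nonempty set of configurations avoiding a
finite family of forbidden patterns. -/
def IsSFT (X : Set (Config A)) : Prop :=
  X.Nonempty ∧ ∃ (n : ℕ) (D : Fin n → Finset (ℤ × ℤ)) (p : Fin n → ℤ × ℤ → A),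
    X = {x : Config A | ∀ (i : Fin n) (u : ℤ × ℤ), ¬ AppearsAt (D i) (p i) x u}

/-- Every pattern appearing in `c` appears at infinitely many positions. -/
def AllPatternsInfinite (c : Config A) : Prop :=
  ∀ (D : Finset (ℤ × ℤ)) (u : ℤ × ℤ),
    {u' : ℤ × ℤ | ∀ d ∈ D, c (u' + d) = c (u + d)}.Infinite

/-- The standard dot product on `ℤ × ℤ`. -/
def dot (u w : ℤ × ℤ) : ℤ := u.1 * w.1 + u.2 * w.2

lemma shift_shift (v w : ℤ × ℤ) (x : Config A) : shift v (shift w x) = shift (v + w) x := by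
  funext u; simp only [shift]; ring_nf

lemma shift_zero (x : Config A) : shift (0 : ℤ × ℤ) x = x := by
  funext u; simp [shift]

variable [TopologicalSpace A]

lemma continuous_shift (v : ℤ × ℤ) : Continuous (shift v : Config A → Config A) :=
  continuous_pi fun u => continuous_apply (u + v)

/-- A nonempty countable closed subset of a compact Hausdorff space has an isolated point. -/
lemma exists_isolated {α : Type*} [TopologicalSpace α] [T2Space α] [CompactSpace α]
    {Y : Set α} (hclosed : IsClosed Y) (hcnt : Y.Countable) (hne : Y.Nonempty) :
    ∃ y0 ∈ Y, ∃ U, IsOpen U ∧ U ∩ Y = {y0} := by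
  by_contra h
  push_neg at h
  haveI : Countable ↥Y := hcnt.to_subtype
  haveI : Nonempty ↥Y := hne.to_subtype
  haveI : CompactSpace ↥Y := isCompact_iff_compactSpace.mp hclosed.isCompact
  have hdense : ∀ y : ↥Y, Dense ({y}ᶜ : Set ↥Y) := by
    intro y
    rw [dense_compl_singleton_iff_not_open]
    intro hopen
    rw [isOpen_induced_iff] at hopen
    obtain ⟨U, hU, hUy⟩ := hopen
    refine h y.1 y.2 U hU ?_
    ext z
    constructor
    · rintro ⟨hzU, hzY⟩
      have : (⟨z, hzY⟩ : ↥Y) ∈ Subtype.val ⁻¹' U := hzU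
      rw [hUy] at this
      exact congrArg Subtype.val this
    · rintro rfl
      have : y ∈ ({y} : Set ↥Y) := rfl
      rw [← hUy] at this
      exact ⟨this, y.2⟩
  have hd := dense_iInter_of_isOpen (fun y : ↥Y => isOpen_compl_singleton)
    hdense
  obtain ⟨z, hz⟩ := hd.nonempty
  exact (Set.mem_iInter.mp hz z) rfl

theorem stmt0 {A : Type*} [Fintype A] [Nonempty A] [TopologicalSpace A] [DiscreteTopology A]
    (X : Set (Config A)) (hX : IsSubshift X) (hcount : X.Countable)
    (x : Config A) (hx : x ∈ X)
    (hmin : ∀ y ∈ X, Preceq y x → Preceq x y) :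
    Periodic x := by
  classical
  set Y := closure (orbit x) with hYdef
  have horbX : orbit x ⊆ X := by
    rintro _ ⟨v, rfl⟩
    rw [← hX.2.2 v]
    exact ⟨x, hx, rfl⟩
  have hYX : Y ⊆ X := closure_minimal horbX hX.2.1
  have hxY : x ∈ Y := subset_closure ⟨0, shift_zero x⟩
  -- shift invariance of Y
  have hinv : ∀ (v : ℤ × ℤ), ∀ z ∈ Y, shift v z ∈ Y := by
    intro v z hz
    have h1 : shift v z ∈ closure (shift v '' orbit x) :=
      image_closure_subset_closure_image (continuous_shift v) ⟨z, hz, rfl⟩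
    have h2 : shift v '' orbit x ⊆ orbit x := by
      rintro _ ⟨_, ⟨w, rfl⟩, rfl⟩
      exact ⟨v + w, (shift_shift v w x).symm⟩
    exact closure_mono h2 h1
  -- isolated point
  obtain ⟨y0, hy0Y, U, hUopen, hUY⟩ :=
    exists_isolated (isClosed_closure (s := orbit x)) (hcount.mono hYX) ⟨x, hxY⟩
  have hy0U : y0 ∈ U := by
    have : y0 ∈ U ∩ Y := by rw [hUY]; rfl
    exact this.1
  -- y0 is in the orbit of x
  obtain ⟨v, hv⟩ : y0 ∈ orbit x := by
    rcases mem_closure_iff.mp hy0Y U hUopen hy0U with ⟨z, hzU, hzorb⟩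
    have : z ∈ U ∩ Y := ⟨hzU, subset_closure hzorb⟩
    rw [hUY] at this
    exact Set.eq_of_mem_singleton this ▸ hzorb
  -- U' isolates x in Y
  set U' : Set (Config A) := (fun z => shift v z) ⁻¹' U with hU'def
  have hU'open : IsOpen U' := hUopen.preimage (continuous_shift v)
  have hxU' : x ∈ U' := by simpa [hU'def, hv] using hy0U
  have hU'Y : ∀ z ∈ Y, z ∈ U' → z = x := by
    intro z hz hzU'
    have h1 : shift v z ∈ U ∩ Y := ⟨hzU', hinv v z hz⟩
    rw [hUY] at h1
    have h2 : shift v z = shift v x := by rw [h1, ← hv]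
    have := congrArg (shift (-v)) h2
    rwa [shift_shift, shift_shift, neg_add_cancel, shift_zero, shift_zero] at this
  -- every y in Y lies in the orbit of x; in fact cover Y
  have hcover : Y ⊆ ⋃ w : ℤ × ℤ, (fun z => shift w z) ⁻¹' U' := by
    intro y hy
    have hxy : x ∈ closure (orbit y) := hmin y (hYX hy) hy
    rcases mem_closure_iff.mp hxy U' hU'open hxU' with ⟨z, hzU', ⟨w, rfl⟩⟩
    exact Set.mem_iUnion.mpr ⟨w, hzU'⟩
  obtain ⟨T, hT⟩ := (isClosed_closure (s := orbit x)).isCompact.elim_finite_subcover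
    (fun w : ℤ × ℤ => (fun z => shift w z) ⁻¹' U')
    (fun w => hU'open.preimage (continuous_shift w)) hcover
  -- Y is finite
  have hYfin : Y.Finite := by
    apply Set.Finite.subset ((T.finite_toSet).image (fun w => shift (-w) x))
    intro y hy
    rcases Set.mem_iUnion₂.mp (hT hy) with ⟨w, hwT, hw⟩
    have h1 : shift w y = x := hU'Y _ (hinv w y hy) hw
    refine ⟨w, hwT, ?_⟩
    have := congrArg (shift (-w)) h1
    rw [shift_shift, neg_add_cancel, shift_zero] at this
    exact this.symm
  have horbfin : (orbit x).Finite := hYfin.subset subset_closure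
  -- extract horizontal and vertical periods
  have hper : ∀ e : ℤ × ℤ, ∃ a : ℤ, a ≠ 0 ∧ shift (a • e) x = x := by
    intro e
    obtain ⟨k₁, -, k₂, -, hne, heq⟩ :=
      Set.infinite_univ.exists_ne_map_eq_of_mapsTo
        (f := fun k : ℤ => shift (k • e) x)
        (fun k _ => (⟨k • e, rfl⟩ : shift (k • e) x ∈ orbit x)) horbfin
    refine ⟨k₁ - k₂, sub_ne_zero_of_ne hne, ?_⟩
    have := congrArg (shift (-(k₂ • e))) heq
    rw [shift_shift, shift_shift, neg_add_cancel, shift_zero] at this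
    have hvec : -(k₂ • e) + k₁ • e = (k₁ - k₂) • e := by module
    rw [hvec] at this
    exact this
  obtain ⟨a, ha, hax⟩ := hper (1, 0)
  obtain ⟨b, hb, hbx⟩ := hper (0, 1)
  refine ⟨a • (1, 0), b • (0, 1), hax, hbx, ?_⟩
  rw [LinearIndependent.pair_iff]
  intro s t hst
  have h1 := congrArg Prod.fst hst
  have h2 := congrArg Prod.snd hst
  simp only [Prod.fst_add, Prod.snd_add, Prod.smul_fst, Prod.smul_snd, smul_eq_mul,
    mul_one, mul_zero, add_zero, zero_add, Prod.fst_zero, Prod.snd_zero] at h1 h2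
  constructor
  · rcases mul_eq_zero.mp h1 with h | h
    · exact h
    · exact absurd h ha
  · rcases mul_eq_zero.mp h2 with h | h
    · exact h
    · exact absurd h hb

end CountableSubshift
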